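/- Define a map from {σ ∈ S_n : c(σ) = r} to the set H_n of n-cycles by: list the maximal elements j_1 < j_2 < ... < j_r of the cycles of σ, and if i_k = σ^{-1}(j_k), replace the transitions i_k → j_k by i_k → j_{k+1} (indices mod r). Then this map is well defined into H_n, and each n-cycle τ ∈ H_n has at most C(n, r) preimages. -/

import Mathlib

open scoped Classical

/-- The number of cycles of a permutation, counting fixed points as cycles. -/
noncomputable def cycleCount {n : ℕ} (σ : Equiv.Perm (Fin n)) : ℕ :=
  σ.cycleType.card + (Finset.univ.filter fun i => σ i = i).card

/-- The set of maximal elements of the cycles of `σ`. -/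
noncomputable def maxCycleElems {n : ℕ} (σ : Equiv.Perm (Fin n)) : Finset (Fin n) :=
  Finset.univ.filter fun j => ∀ k, σ.SameCycle j k → k ≤ j

/-- The successor of `j` in a finite set `J`, in cyclic increasing order:
the least element of `J` larger than `j`, wrapping around to the least
element of `J`. -/
noncomputable def nextIn {n : ℕ} (J : Finset (Fin n)) (j : Fin n) : Fin n :=
  ((J.filter fun k => j < k).min).getD ((J.min).getD j)

/-- The patching map of Section 2.4: listing the maximal elements
`j₁ < j₂ < ⋯ < j_r` of the cycles of `σ` and setting `i_k = σ⁻¹ j_k`, the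
transitions `i_k → j_k` are replaced by `i_k → j_{k+1}` (indices mod `r`). -/
noncomputable def patch {n : ℕ} (σ : Equiv.Perm (Fin n)) : Fin n → Fin n :=
  fun x => if σ x ∈ maxCycleElems σ then nextIn (maxCycleElems σ) (σ x) else σ x

/-!
With `J = {j₁ < ⋯ < j_r}` the set of cycle maxima of `σ`, the patched map is `ρ ∘ σ`, where
`ρ` shifts `j_k ↦ j_{k+1}` and fixes everything else; `ρ` is a permutation, so
`τ = ρ ∘ σ` is one too. Within a cycle of `σ`, `τ` agrees with `σ` except at the step into the
maximum, so every cycle of `σ` lies inside one cycle of `τ`, and the step `i_k ↦ j_{k+1}` joins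
the cycle of `j_k` to that of `j_{k+1}`. Hence `τ` has a single orbit: it is an `n`-cycle.
Conversely `σ = ρ⁻¹ ∘ τ` is determined by `τ` and `J`, an `r`-subset of `{1, …, n}`.
-/

open Equiv Finset Function

section NextIn

variable {n : ℕ} {J : Finset (Fin n)}

lemma nextIn_eq_min' {j : Fin n} (h : (J.filter (j < ·)).Nonempty) :
    nextIn J j = (J.filter (j < ·)).min' h := by
  rw [nextIn, ← coe_min' h]
  rfl

lemma nextIn_eq_min'_of_forall_le {j : Fin n} (hJ : J.Nonempty) (h : ∀ k ∈ J, k ≤ j) :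
    nextIn J j = J.min' hJ := by
  rw [nextIn, filter_false_of_mem fun k hk => not_lt.2 (h k hk), ← coe_min' hJ]
  rfl

lemma nextIn_mem (hJ : J.Nonempty) (j : Fin n) : nextIn J j ∈ J := by
  by_cases h : (J.filter (j < ·)).Nonempty
  · rw [nextIn_eq_min' h]
    exact (mem_filter.1 (min'_mem _ h)).1
  · rw [nextIn_eq_min'_of_forall_le hJ fun k hk => not_lt.1 fun hjk =>
      h ⟨k, mem_filter.2 ⟨hk, hjk⟩⟩]
    exact min'_mem _ hJ

lemma nextIn_eq_of_lt {i j : Fin n} (hj : j ∈ J) (hij : i < j)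
    (hmin : ∀ k ∈ J, i < k → j ≤ k) : nextIn J i = j := by
  have hj' : j ∈ J.filter (i < ·) := mem_filter.2 ⟨hj, hij⟩
  rw [nextIn_eq_min' ⟨j, hj'⟩]
  exact le_antisymm (min'_le _ _ hj')
    (le_min' _ _ _ fun k hk => hmin k (mem_filter.1 hk).1 (mem_filter.1 hk).2)

lemma exists_nextIn_eq {j : Fin n} (hj : j ∈ J) (hne : j ≠ J.min' ⟨j, hj⟩) :
    ∃ i ∈ J, i < j ∧ nextIn J i = j := by
  have h : (J.filter (· < j)).Nonempty :=
    ⟨_, mem_filter.2 ⟨min'_mem _ _, lt_of_le_of_ne (min'_le _ _ hj) hne.symm⟩⟩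
  obtain ⟨hiJ, hij⟩ := mem_filter.1 (max'_mem _ h)
  refine ⟨_, hiJ, hij, nextIn_eq_of_lt hj hij fun k hk hik => ?_⟩
  by_contra! hkj
  exact not_lt.2 (le_max' _ k (mem_filter.2 ⟨hk, hkj⟩)) hik

noncomputable def cyclicSucc (J : Finset (Fin n)) (x : Fin n) : Fin n :=
  if x ∈ J then nextIn J x else x

lemma cyclicSucc_surjective (J : Finset (Fin n)) : Surjective (cyclicSucc J) := by
  intro j
  by_cases hj : j ∈ J
  · have hJ : J.Nonempty := ⟨j, hj⟩
    by_cases hmin : j = J.min' hJ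
    · refine ⟨J.max' hJ, ?_⟩
      rw [cyclicSucc, if_pos (max'_mem _ _), hmin,
        nextIn_eq_min'_of_forall_le _ fun k hk => le_max' _ _ hk]
    · obtain ⟨i, hi, -, rfl⟩ := exists_nextIn_eq hj hmin
      exact ⟨i, if_pos hi⟩
  · exact ⟨j, if_neg hj⟩

lemma cyclicSucc_injective (J : Finset (Fin n)) : Injective (cyclicSucc J) :=
  Finite.injective_iff_surjective.2 (cyclicSucc_surjective J)

lemma patch_eq_comp (σ : Perm (Fin n)) : patch σ = cyclicSucc (maxCycleElems σ) ∘ σ := rfl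

lemma patch_injective (σ : Perm (Fin n)) : Injective (patch σ) :=
  (cyclicSucc_injective _).comp σ.injective

end NextIn

namespace Equiv.Perm

variable {α : Type*} {f g : Perm α}

theorem SameCycle.of_forall_sameCycle_apply (h : ∀ x, g.SameCycle x (f x)) {x y : α}
    (hxy : f.SameCycle x y) : g.SameCycle x y := by
  obtain ⟨k, rfl⟩ := hxy
  induction k using Int.induction_on with
  | zero => exact SameCycle.refl _ _
  | succ i ih =>
    rw [add_comm, zpow_add, zpow_one, mul_apply]
    exact ih.trans (h _)
  | pred i ih =>
    rw [sub_eq_neg_add, zpow_add, zpow_neg_one, mul_apply]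
    have hstep := h (f⁻¹ ((f ^ (-(i : ℤ))) x))
    rw [coe_inv, Equiv.apply_symm_apply] at hstep
    exact ih.trans hstep.symm

theorem isCycle_and_support_eq_univ_of_forall_sameCycle [Fintype α] [DecidableEq α]
    (hα : 1 < Fintype.card α) (h : ∀ x y, f.SameCycle x y) :
    f.IsCycle ∧ f.support = Finset.univ := by
  have hne : ∀ x, f x ≠ x := fun x hx => by
    obtain ⟨y, hy⟩ := Fintype.exists_ne_of_one_lt_card hα x
    exact hy ((h x y).eq_of_left hx).symm
  obtain ⟨x⟩ : Nonempty α := Fintype.card_pos_iff.1 (by omega)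
  exact ⟨⟨x, hne x, fun y _ => h x y⟩, Finset.eq_univ_of_forall fun y => mem_support.2 (hne y)⟩

end Equiv.Perm

section Patch

open Equiv.Perm

variable {n : ℕ}

noncomputable def cycleMax (σ : Perm (Fin n)) (x : Fin n) : Fin n :=
  (univ.filter (σ.SameCycle x)).max' ⟨x, mem_filter.2 ⟨mem_univ _, SameCycle.refl _ _⟩⟩

lemma sameCycle_cycleMax (σ : Perm (Fin n)) (x : Fin n) : σ.SameCycle x (cycleMax σ x) :=
  (mem_filter.1 (max'_mem _ _)).2

lemma cycleMax_mem_maxCycleElems (σ : Perm (Fin n)) (x : Fin n) :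
    cycleMax σ x ∈ maxCycleElems σ :=
  mem_filter.2 ⟨mem_univ _, fun _ hk =>
    le_max' _ _ (mem_filter.2 ⟨mem_univ _, (sameCycle_cycleMax σ x).trans hk⟩)⟩

lemma eq_of_mem_maxCycleElems_of_sameCycle {σ : Perm (Fin n)} {i j : Fin n}
    (hi : i ∈ maxCycleElems σ) (hj : j ∈ maxCycleElems σ) (h : σ.SameCycle i j) : i = j :=
  le_antisymm ((mem_filter.1 hj).2 _ h.symm) ((mem_filter.1 hi).2 _ h)

variable {σ τ : Perm (Fin n)}

/-- A step of `σ` into `J` from the cycle of `j` lands on `j` itself, the only maximum of that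
cycle; every other step of `σ` is also a step of `τ`. -/
lemma sameCycle_pow_apply_of_coe_eq_patch (hτ : ⇑τ = patch σ) {j : Fin n}
    (hj : j ∈ maxCycleElems σ) (k : ℕ) : τ.SameCycle j ((σ ^ k) j) := by
  induction k with
  | zero => exact SameCycle.refl _ _
  | succ k ih =>
    rw [pow_succ', mul_apply]
    by_cases hk : σ ((σ ^ k) j) ∈ maxCycleElems σ
    · rw [← eq_of_mem_maxCycleElems_of_sameCycle hj hk
        (sameCycle_apply_right.2 (sameCycle_pow_right.2 (SameCycle.refl _ _)))]
    · have hτk : τ ((σ ^ k) j) = σ ((σ ^ k) j) := by rw [hτ]; exact if_neg hk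
      exact hτk ▸ sameCycle_apply_right.2 ih

lemma sameCycle_apply_of_coe_eq_patch (hτ : ⇑τ = patch σ) (y : Fin n) :
    τ.SameCycle y (σ y) := by
  by_cases hy : σ y ∈ maxCycleElems σ
  · obtain ⟨k, hk⟩ := (sameCycle_apply_left.2 (SameCycle.refl σ y)).exists_nat_pow_eq
    exact (hk ▸ sameCycle_pow_apply_of_coe_eq_patch hτ hy k).symm
  · have hτy : τ y = σ y := by rw [hτ]; exact if_neg hy
    exact hτy ▸ sameCycle_apply_right.2 (SameCycle.refl _ _)

theorem Equiv.Perm.SameCycle.of_coe_eq_patch (hτ : ⇑τ = patch σ) {x y : Fin n}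
    (h : σ.SameCycle x y) : τ.SameCycle x y :=
  h.of_forall_sameCycle_apply (sameCycle_apply_of_coe_eq_patch hτ)

lemma sameCycle_nextIn_of_coe_eq_patch (hτ : ⇑τ = patch σ) {j : Fin n}
    (hj : j ∈ maxCycleElems σ) : τ.SameCycle j (nextIn (maxCycleElems σ) j) := by
  have hτj : τ (σ⁻¹ j) = nextIn (maxCycleElems σ) j := by
    rw [hτ, patch, coe_inv, Equiv.apply_symm_apply, if_pos hj]
  exact hτj ▸ sameCycle_apply_right.2
    (SameCycle.of_coe_eq_patch hτ ⟨-1, by rw [zpow_neg_one]⟩)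

lemma sameCycle_min'_of_coe_eq_patch (hτ : ⇑τ = patch σ) (hJ : (maxCycleElems σ).Nonempty)
    {j : Fin n} (hj : j ∈ maxCycleElems σ) : τ.SameCycle ((maxCycleElems σ).min' hJ) j := by
  induction j using WellFoundedLT.induction with
  | _ j ih =>
    by_cases hmin : j = (maxCycleElems σ).min' hJ
    · rw [hmin]
    · obtain ⟨i, hi, hij, rfl⟩ := exists_nextIn_eq hj hmin
      exact (ih i hij hi).trans (sameCycle_nextIn_of_coe_eq_patch hτ hi)

lemma sameCycle_of_coe_eq_patch (hτ : ⇑τ = patch σ) (x y : Fin n) : τ.SameCycle x y := by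
  have hJ : (maxCycleElems σ).Nonempty := ⟨_, cycleMax_mem_maxCycleElems σ x⟩
  have h (z : Fin n) : τ.SameCycle z ((maxCycleElems σ).min' hJ) :=
    ((sameCycle_cycleMax σ z).of_coe_eq_patch hτ).trans
      (sameCycle_min'_of_coe_eq_patch hτ hJ (cycleMax_mem_maxCycleElems σ z)).symm
  exact (h x).trans (h y).symm

theorem exists_isCycle_coe_eq_patch (hn : 2 ≤ n) (σ : Perm (Fin n)) :
    ∃ τ : Perm (Fin n), ⇑τ = patch σ ∧ τ.IsCycle ∧ τ.support = univ := by
  let τ := Equiv.ofBijective _ (Finite.injective_iff_bijective.1 (patch_injective σ))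
  have hτ : ⇑τ = patch σ := rfl
  exact ⟨τ, hτ, isCycle_and_support_eq_univ_of_forall_sameCycle (by rwa [Fintype.card_fin])
    (sameCycle_of_coe_eq_patch hτ)⟩

end Patch

section Counting

open Equiv.Perm

variable {n : ℕ}

lemma filter_fixed_maxCycleElems (σ : Perm (Fin n)) :
    (maxCycleElems σ).filter (fun j => σ j = j) = univ.filter fun j => σ j = j := by
  ext j
  simp only [maxCycleElems, mem_filter, mem_univ, true_and, and_iff_right_iff_imp]
  exact fun hj k hk => (hk.eq_of_left hj).ge

lemma card_filter_not_fixed_maxCycleElems (σ : Perm (Fin n)) :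
    #((maxCycleElems σ).filter fun j => ¬σ j = j) = #σ.cycleFactorsFinset := by
  refine card_bij (fun j _ => σ.cycleOf j) (fun j hj => ?_) (fun i hi j hj hij => ?_)
    (fun c hc => ?_)
  · exact cycleOf_mem_cycleFactorsFinset_iff.2 (mem_support.2 (mem_filter.1 hj).2)
  · have hjj : j ∈ (σ.cycleOf j).support :=
      mem_support_cycleOf_iff.2 ⟨SameCycle.refl _ _, mem_support.2 (mem_filter.1 hj).2⟩
    rw [← hij, mem_support_cycleOf_iff] at hjj
    exact eq_of_mem_maxCycleElems_of_sameCycle (mem_filter.1 hi).1 (mem_filter.1 hj).1 hjj.1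
  · obtain ⟨x, hx⟩ := (mem_cycleFactorsFinset_iff.1 hc).1.nonempty_support
    have hσx : σ x ≠ x := mem_support.1 (mem_cycleFactorsFinset_support_le hc hx)
    refine ⟨cycleMax σ x, mem_filter.2 ⟨cycleMax_mem_maxCycleElems σ x, fun hfix => hσx ?_⟩, ?_⟩
    · rw [(sameCycle_cycleMax σ x).symm.eq_of_left hfix] at hfix
      exact hfix
    · rw [← (sameCycle_cycleMax σ x).cycleOf_eq, cycle_is_cycleOf hx hc]

lemma card_maxCycleElems (σ : Perm (Fin n)) : #(maxCycleElems σ) = cycleCount σ := by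
  rw [cycleCount, ← card_filter_add_card_filter_not (fun j => σ j = j),
    filter_fixed_maxCycleElems, card_filter_not_fixed_maxCycleElems, cycleType_def,
    Multiset.card_map, add_comm]
  rfl

lemma eq_of_patch_eq_of_maxCycleElems_eq {σ₁ σ₂ : Perm (Fin n)} (h : patch σ₁ = patch σ₂)
    (hJ : maxCycleElems σ₁ = maxCycleElems σ₂) : σ₁ = σ₂ := by
  rw [patch_eq_comp, patch_eq_comp, hJ] at h
  exact Equiv.ext fun x => cyclicSucc_injective _ (congrFun h x)

lemma injOn_maxCycleElems_patch_fiber (τ : Perm (Fin n)) :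
    Set.InjOn maxCycleElems {σ : Perm (Fin n) | ∀ x, τ x = patch σ x} :=
  fun _ h₁ _ h₂ hJ =>
    eq_of_patch_eq_of_maxCycleElems_eq (funext fun x => (h₁ x).symm.trans (h₂ x)) hJ

end Counting

theorem patching_map_well_defined_and_few_preimages_general (n r : ℕ)
    (hn : 2 ≤ n) :
    (∀ σ : Equiv.Perm (Fin n), cycleCount σ = r →
      ∃ τ : Equiv.Perm (Fin n), (⇑τ = patch σ) ∧
        τ.IsCycle ∧ τ.support = Finset.univ) ∧
    (∀ τ : Equiv.Perm (Fin n), τ.IsCycle → τ.support = Finset.univ →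
      ((Finset.univ.filter fun σ : Equiv.Perm (Fin n) =>
          cycleCount σ = r ∧ ∀ x, τ x = patch σ x).card ≤ n.choose r)) := by
  refine ⟨fun σ _ => exists_isCycle_coe_eq_patch hn σ, fun τ _ _ => ?_⟩
  calc _ ≤ #((univ : Finset (Fin n)).powersetCard r) := by
        refine card_le_card_of_injOn maxCycleElems (fun σ hσ => ?_) fun σ₁ h₁ σ₂ h₂ =>
          injOn_maxCycleElems_patch_fiber τ (mem_filter.1 h₁).2.2 (mem_filter.1 h₂).2.2
        exact mem_powersetCard.2
          ⟨subset_univ _, (card_maxCycleElems σ).trans (mem_filter.1 hσ).2.1⟩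
    _ = n.choose r := by simp

/-- the patching map is well defined from
`{σ : c(σ) = r}` into the set `Hₙ` of `n`-cycles, and every `τ ∈ Hₙ` has at
most `C(n, r)` preimages. -/
theorem patching_map_well_defined_and_few_preimages (n r : ℕ)
    (hn : 2 ≤ n) (hr : 1 ≤ r) :
    (∀ σ : Equiv.Perm (Fin n), cycleCount σ = r →
      ∃ τ : Equiv.Perm (Fin n), (⇑τ = patch σ) ∧
        τ.IsCycle ∧ τ.support = Finset.univ) ∧
    (∀ τ : Equiv.Perm (Fin n), τ.IsCycle → τ.support = Finset.univ →
      ((Finset.univ.filter fun σ : Equiv.Perm (Fin n) =>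
          cycleCount σ = r ∧ ∀ x, τ x = patch σ x).card ≤ n.choose r)) :=
  patching_map_well_defined_and_few_preimages_general n r hn
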